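/- arXiv:1907.06289 — 3 statements merged into one kernel-verified Lean document; each statement's English description precedes it below -/
import Mathlib

section
/- Let f : Γ → T be a crossed homomorphism such that f*π : Γ → G is surjective. Then {t ∈ T : t · f(x) · (π(x) t⁻¹ π(x)⁻¹) = f(x) for all x ∈ Γ} = T ∩ Z(G), where Z(G) is the center of G. Consequently, if T is finite, the set of crossed homomorphisms of the form x ↦ t · f(x) · (π(x) t⁻¹ π(x)⁻¹) for some t ∈ T has exactly |T| / |T ∩ Z(G)| elements. -/
/-!
Writing `g = f * π`, the twisted map is `x ↦ t * g x * t⁻¹ * (π x)⁻¹`, so the twists by `s` and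
`t` agree exactly when `s⁻¹ * t` commutes with every `g x`; since `g` is surjective, this means
`s⁻¹ * t` is central. Taking `s = 1` identifies the fixers of `f` with `T ∩ Z(G)`, and in general
the twists by elements of `T` are in bijection with the cosets of `T ∩ Z(G)` in `T`.
-/

theorem Nat.card_range_eq_card_quotient {α X : Type*} [Group α] (H : Subgroup α) (φ : α → X)
    (hφ : ∀ a b, φ a = φ b ↔ a⁻¹ * b ∈ H) : Nat.card (Set.range φ) = Nat.card (α ⧸ H) :=
  Nat.card_congr <| (Setoid.quotientKerEquivRange φ).symm.trans <|
    Quotient.congrRight fun a b => by rw [Setoid.ker_def, hφ, QuotientGroup.leftRel_apply]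

theorem conj_eq_conj_iff {G : Type*} [Group G] (s t y : G) :
    s * y * s⁻¹ = t * y * t⁻¹ ↔ y * (s⁻¹ * t) = s⁻¹ * t * y := by
  rw [← mul_left_inj t, ← mul_right_inj s⁻¹]
  simp only [mul_assoc, inv_mul_cancel_left, inv_mul_cancel, mul_one]

theorem Subgroup.card_subgroupOf_eq_card_inf {G : Type*} [Group G] (H K : Subgroup G) :
    Nat.card (H.subgroupOf K) = Nat.card (K ⊓ H : Subgroup G) := by
  rw [← Subgroup.inf_subgroupOf_left]
  exact Nat.card_congr (Subgroup.subgroupOfEquivOfLe inf_le_left).toEquiv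

namespace CrossedHom

variable {Γ G : Type*} [Group Γ] [Group G]

/-- When `f` is a crossed homomorphism, so is its twist by `t ∈ T`, and it is cohomologous
to `f`. -/
def twist (π : Γ →* G) (f : Γ → G) (t : G) : Γ → G :=
  fun x => t * f x * (π x * t⁻¹ * (π x)⁻¹)

theorem twist_apply (π : Γ →* G) (f : Γ → G) (t : G) (x : Γ) :
    twist π f t x = t * (f x * π x) * t⁻¹ * (π x)⁻¹ := by
  simp only [twist, mul_assoc]

@[simp]
theorem twist_one (π : Γ →* G) (f : Γ → G) : twist π f 1 = f := by
  ext x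
  simp [twist]

variable {π : Γ →* G} {f : Γ → G}

theorem twist_eq_twist_iff (hsurj : Function.Surjective (fun x => f x * π x)) (s t : G) :
    twist π f s = twist π f t ↔ s⁻¹ * t ∈ Subgroup.center G := by
  simp only [funext_iff, twist_apply, mul_left_inj, conj_eq_conj_iff, Subgroup.mem_center_iff]
  exact (hsurj.forall (p := fun g => g * (s⁻¹ * t) = s⁻¹ * t * g)).symm

theorem twist_eq_self_iff (hsurj : Function.Surjective (fun x => f x * π x)) (t : G) :
    twist π f t = f ↔ t ∈ Subgroup.center G := by
  rw [← Subgroup.inv_mem_iff, ← mul_one t⁻¹, ← twist_eq_twist_iff hsurj, twist_one]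

theorem card_range_twist (hsurj : Function.Surjective (fun x => f x * π x)) (T : Subgroup G)
    [Finite T] :
    Nat.card (Set.range fun t : T => twist π f t) =
      Nat.card T / Nat.card (T ⊓ Subgroup.center G : Subgroup G) := by
  set H := (Subgroup.center G).subgroupOf T
  rw [← Subgroup.card_subgroupOf_eq_card_inf, Subgroup.card_eq_card_quotient_mul_card_subgroup H,
    Nat.mul_div_cancel _ Nat.card_pos]
  exact Nat.card_range_eq_card_quotient H _ fun s t => by
    rw [twist_eq_twist_iff hsurj, Subgroup.mem_subgroupOf, Subgroup.coe_mul, Subgroup.coe_inv]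

end CrossedHom

theorem statement2_general {Γ G : Type*} [Group Γ] [Group G] (T : Subgroup G)
    (π : Γ →* G) (f : Γ → G)
    (hsurj : Function.Surjective (fun x => f x * π x)) :
    {t : G | t ∈ T ∧ ∀ x, t * f x * (π x * t⁻¹ * (π x)⁻¹) = f x} =
      (T : Set G) ∩ (Subgroup.center G : Set G) ∧
    (Finite T →
      Nat.card {f' : Γ → G | ∃ t ∈ T, f' = fun x => t * f x * (π x * t⁻¹ * (π x)⁻¹)} =
        Nat.card T / Nat.card (T ⊓ Subgroup.center G : Subgroup G)) := by
  refine ⟨?_, fun _ => ?_⟩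
  · ext t
    simp only [Set.mem_ofPred_eq, Set.mem_inter_iff, SetLike.mem_coe, ← funext_iff]
    exact and_congr_right fun _ => CrossedHom.twist_eq_self_iff hsurj t
  · have hset : {f' : Γ → G | ∃ t ∈ T, f' = fun x => t * f x * (π x * t⁻¹ * (π x)⁻¹)} =
        Set.range fun t : T => CrossedHom.twist π f t := by
      ext f'
      simp only [Set.mem_ofPred_eq, Set.mem_range, eq_comm, Subtype.exists, exists_prop]
      rfl
    rw [hset, CrossedHom.card_range_twist hsurj]

/-- Let `Γ`, `G` be groups, `T ⊴ G`, `π : Γ → G` a homomorphism, and `f : Γ → T`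
a crossed homomorphism such that `f*π : Γ → G` is surjective.  Then
`{t ∈ T : t·f(x)·(π(x) t⁻¹ π(x)⁻¹) = f(x) for all x} = T ∩ Z(G)`, and consequently, if `T` is
finite, the set of crossed homomorphisms of the form `x ↦ t·f(x)·(π(x) t⁻¹ π(x)⁻¹)` for some
`t ∈ T` has exactly `|T| / |T ∩ Z(G)|` elements. -/
theorem statement2 {Γ G : Type*} [Group Γ] [Group G] (T : Subgroup G) (hT : T.Normal)
    (π : Γ →* G) (f : Γ → G) (hfT : ∀ x, f x ∈ T)
    (hf : ∀ x y, f (x * y) = f x * (π x * f y * (π x)⁻¹))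
    (hsurj : Function.Surjective (fun x => f x * π x)) :
    {t : G | t ∈ T ∧ ∀ x, t * f x * (π x * t⁻¹ * (π x)⁻¹) = f x} =
      (T : Set G) ∩ (Subgroup.center G : Set G) ∧
    (Finite T →
      Nat.card {f' : Γ → G | ∃ t ∈ T, f' = fun x => t * f x * (π x * t⁻¹ * (π x)⁻¹)} =
        Nat.card T / Nat.card (T ⊓ Subgroup.center G : Subgroup G)) :=
  statement2_general T π f hsurj
end

section
/- Suppose T and N are normal subgroups of G with N ⊆ T and a(N) = a(T), π : Γ → G is a surjective homomorphism, and φ : Γ → G is a homomorphism with φ(x)N = π(x)N for all x ∈ Γ. Then b(N,φ,χ) ≤ b(N·(T ∩ [G,G]), φ, χ), where [G,G] is the commutator subgroup of G and N·(T ∩ [G,G]) is the (normal) subgroup of G generated by N and T ∩ [G,G]. -/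
/-- The index `ind(g) = n − #{orbits of ⟨ρ(g)⟩ on {1,…,n}}` of a group element under a
permutation representation `ρ : G → Sym({1,…,n})`. -/
noncomputable def permIndex {n : ℕ} {G : Type*} [Group G] (ρ : G →* Equiv.Perm (Fin n))
    (g : G) : ℕ :=
  n - Nat.card (MulAction.orbitRel.Quotient (Subgroup.zpowers (ρ g)) (Fin n))

/-- `a(H) = min{ind(h) : h ∈ H, h ≠ 1}`. -/
noncomputable def aInv {n : ℕ} {G : Type*} [Group G] (ρ : G →* Equiv.Perm (Fin n))
    (H : Set G) : ℕ :=
  sInf {k | ∃ h ∈ H, h ≠ 1 ∧ permIndex ρ h = k}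

/-- `A(H) = {h ∈ H : h ≠ 1 and ind(h) = a(H)}`. -/
noncomputable def ASet {n : ℕ} {G : Type*} [Group G] (ρ : G →* Equiv.Perm (Fin n))
    (H : Set G) : Set G :=
  {h | h ∈ H ∧ h ≠ 1 ∧ permIndex ρ h = aInv ρ H}

/-- The `M`-conjugacy class of an element `c`. -/
def mConjClass {G : Type*} [Group G] (M : Subgroup G) (c : G) : Set G :=
  {g | ∃ t ∈ M, g = t * c * t⁻¹}

/-- The set of `M`-conjugacy classes contained in `A(M)`. -/
noncomputable def conjClassesIn {n : ℕ} {G : Type*} [Group G] (ρ : G →* Equiv.Perm (Fin n))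
    (M : Subgroup G) : Set (Set G) :=
  {C | (∃ c ∈ M, C = mConjClass M c) ∧ C ⊆ ASet ρ (M : Set G)}

/-- The twisted action `σ·C = {ψ(σ) c^{k(σ)} ψ(σ)⁻¹ : c ∈ C}`, where `k(σ)` represents
`χ(σ)⁻¹ ∈ (ℤ/mℤ)ˣ`. -/
def classAct {Γ G : Type*} [Group Γ] [Group G] {m : ℕ} (ψ : Γ →* G) (χ : Γ →* (ZMod m)ˣ)
    (σ : Γ) (C : Set G) : Set G :=
  {g | ∃ c ∈ C, g = ψ σ * c ^ (ZMod.val (((χ σ)⁻¹ : (ZMod m)ˣ) : ZMod m)) * (ψ σ)⁻¹}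

/-- `b(M,ψ,χ)` : the number of orbits of the twisted action on the set of `M`-conjugacy
classes contained in `A(M)`. -/
noncomputable def bInv {n : ℕ} {Γ G : Type*} [Group Γ] [Group G] {m : ℕ}
    (ρ : G →* Equiv.Perm (Fin n)) (M : Subgroup G) (ψ : Γ →* G) (χ : Γ →* (ZMod m)ˣ) : ℕ :=
  Nat.card {O : Set (Set G) |
    ∃ C ∈ conjClassesIn ρ M, O = {C' | ∃ σ : Γ, classAct ψ χ σ C = C'}}

/-!
Put `N' = N·(T ∩ [G,G])`. Since `N ≤ N' ≤ T` and `a(N) = a(T)`, `a` is constant on this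
chain, so `A(N) ⊆ A(N')` and every `N`-class in `A(N)` lies in an `N'`-class in `A(N')`.
Sending the orbit of the `N`-class of `c` to the orbit of its `N'`-class is injective: if
`c₂ = t (σ·c₁) t⁻¹` with `t ∈ N'`, write `t = n u` with `n ∈ N` and `u ∈ [G,G] = π([Γ,Γ])`.
As `φ ≡ π mod N` we may take `u = φ(γ)` with `γ ∈ [Γ,Γ]`; then `χ(γ) = 1`, so conjugating by
`φ(γ)` is the action of `γ`, and `c₂` lies in the `N`-class of `(γσ)·c₁`.
-/

open MulAction Subgroup

theorem orbitRel_zpowers_iff {α : Type*} (σ : Equiv.Perm α) (a b : α) :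
    orbitRel (zpowers σ) α a b ↔ ∃ z : ℤ, (σ ^ z) b = a := by
  rw [orbitRel_apply, mem_orbit_iff]
  constructor
  · rintro ⟨⟨_, z, rfl⟩, h⟩
    exact ⟨z, h⟩
  · rintro ⟨z, h⟩
    exact ⟨⟨σ ^ z, z, rfl⟩, h⟩

theorem card_orbitRel_quotient_zpowers_conj {α : Type*} (σ τ : Equiv.Perm α) :
    Nat.card (orbitRel.Quotient (zpowers (τ * σ * τ⁻¹)) α) =
      Nat.card (orbitRel.Quotient (zpowers σ) α) := by
  refine Nat.card_congr (Quotient.congr τ⁻¹ fun a b => ?_)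
  simp only [orbitRel_zpowers_iff, conj_zpow, Equiv.Perm.mul_apply, Equiv.Perm.eq_inv_iff_eq]

section Index

variable {n : ℕ} {G : Type*} [Group G] (ρ : G →* Equiv.Perm (Fin n))

theorem permIndex_conj (g c : G) : permIndex ρ (g * c * g⁻¹) = permIndex ρ c := by
  rw [permIndex, permIndex, map_mul, map_mul, map_inv, card_orbitRel_quotient_zpowers_conj]

theorem aInv_le_aInv_of_subset {H K : Set G} (hHK : H ⊆ K) {c : G} (hc : c ∈ H) (hc1 : c ≠ 1) :
    aInv ρ K ≤ aInv ρ H := by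
  obtain ⟨h, hh, hh1, hhi⟩ :=
    Nat.sInf_mem (s := {k | ∃ h ∈ H, h ≠ 1 ∧ permIndex ρ h = k}) ⟨_, c, hc, hc1, rfl⟩
  exact Nat.sInf_le ⟨h, hHK hh, hh1, hhi⟩

theorem ASet_subset_ASet {H K L : Set G} (hHK : H ⊆ K) (hKL : K ⊆ L)
    (ha : aInv ρ H = aInv ρ L) : ASet ρ H ⊆ ASet ρ K := by
  rintro c ⟨hc, hc1, hci⟩
  have hle : aInv ρ K ≤ aInv ρ H := aInv_le_aInv_of_subset ρ hHK hc hc1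
  have hge : aInv ρ L ≤ aInv ρ K := aInv_le_aInv_of_subset ρ hKL (hHK hc) hc1
  exact ⟨hHK hc, hc1, by omega⟩

end Index

section ConjClass

variable {G : Type*} [Group G]

theorem mem_mConjClass_self (M : Subgroup G) (c : G) : c ∈ mConjClass M c :=
  ⟨1, M.one_mem, by group⟩

theorem mConjClass_eq_iff_mem {M : Subgroup G} {b c : G} :
    mConjClass M b = mConjClass M c ↔ c ∈ mConjClass M b := by
  refine ⟨fun h => h ▸ mem_mConjClass_self M c, ?_⟩
  rintro ⟨t, ht, rfl⟩
  ext g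
  constructor
  · rintro ⟨s, hs, rfl⟩
    exact ⟨s * t⁻¹, M.mul_mem hs (M.inv_mem ht), by group⟩
  · rintro ⟨s, hs, rfl⟩
    exact ⟨s * t, M.mul_mem hs ht, by group⟩

theorem conjClassesIn_eq_image {n : ℕ} (ρ : G →* Equiv.Perm (Fin n)) (M : Subgroup G) :
    conjClassesIn ρ M = mConjClass M '' ASet ρ M := by
  ext C
  constructor
  · rintro ⟨⟨c, -, rfl⟩, hC⟩
    exact ⟨c, hC (mem_mConjClass_self M c), rfl⟩
  · rintro ⟨c, ⟨hcM, hc1, hci⟩, rfl⟩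
    refine ⟨⟨c, hcM, rfl⟩, ?_⟩
    rintro _ ⟨t, ht, rfl⟩
    exact ⟨M.mul_mem (M.mul_mem ht hcM) (M.inv_mem ht), by simpa using hc1,
      by rw [permIndex_conj, hci]⟩

end ConjClass

section TwistedAction

variable {Γ G : Type*} [Group Γ] [Group G] {m : ℕ} (φ : Γ →* G) (χ : Γ →* (ZMod m)ˣ)

def twistConj (σ : Γ) (c : G) : G :=
  φ σ * c ^ (((χ σ)⁻¹ : (ZMod m)ˣ) : ZMod m).val * (φ σ)⁻¹

def classOrbit (C : Set G) : Set (Set G) :=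
  Set.range fun σ => classAct φ χ σ C

theorem classAct_eq_image (σ : Γ) (C : Set G) : classAct φ χ σ C = twistConj φ χ σ '' C := by
  ext g
  simp only [classAct, twistConj, Set.mem_ofPred_eq, Set.mem_image, eq_comm]

variable {φ χ}

theorem twistConj_one (hm : Monoid.exponent G ∣ m) (c : G) : twistConj φ χ 1 c = c := by
  have hc : c ^ (1 : ZMod m).val = c := by
    rw [ZMod.val_one_eq_one_mod,
      pow_eq_pow_of_modEq (Nat.mod_modEq 1 m) (Monoid.exponent_dvd_iff_forall_pow_eq_one.mp hm c),
      pow_one]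
  simp [twistConj, hc]

theorem twistConj_mul (hm : Monoid.exponent G ∣ m) (σ τ : Γ) (c : G) :
    twistConj φ χ σ (twistConj φ χ τ c) = twistConj φ χ (σ * τ) c := by
  have hc : ∀ a b : ZMod m, c ^ (a.val * b.val) = c ^ (a * b).val := fun a b =>
    pow_eq_pow_of_modEq (by rw [ZMod.val_mul]; exact (Nat.mod_modEq _ m).symm)
      (Monoid.exponent_dvd_iff_forall_pow_eq_one.mp hm c)
  simp only [twistConj]
  rw [conj_pow, ← pow_mul, hc, map_mul, map_mul, mul_inv_rev, Units.val_mul]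
  group

theorem twistConj_of_map_eq_one {γ : Γ} (hγ : χ γ = 1) (σ : Γ) (c : G) :
    twistConj φ χ (γ * σ) c = φ γ * twistConj φ χ σ c * (φ γ)⁻¹ := by
  simp only [twistConj, map_mul, hγ, one_mul]
  group

theorem classAct_one (hm : Monoid.exponent G ∣ m) (C : Set G) : classAct φ χ 1 C = C := by
  simp [classAct_eq_image, twistConj_one hm]

theorem classAct_mul (hm : Monoid.exponent G ∣ m) (σ τ : Γ) (C : Set G) :
    classAct φ χ σ (classAct φ χ τ C) = classAct φ χ (σ * τ) C := by
  simp only [classAct_eq_image, Set.image_image, twistConj_mul hm]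

theorem classOrbit_eq_iff (hm : Monoid.exponent G ∣ m) {C D : Set G} :
    classOrbit φ χ C = classOrbit φ χ D ↔ ∃ σ, classAct φ χ σ C = D := by
  constructor
  · intro h
    have hD : D ∈ classOrbit φ χ D := ⟨1, classAct_one hm D⟩
    rwa [← h] at hD
  · rintro ⟨σ, rfl⟩
    ext E
    constructor
    · rintro ⟨τ, rfl⟩
      exact ⟨τ * σ⁻¹, by simp only [classAct_mul hm, inv_mul_cancel_right]⟩
    · rintro ⟨τ, rfl⟩
      exact ⟨τ * σ, (classAct_mul hm τ σ C).symm⟩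

theorem classAct_mConjClass {M : Subgroup G} (hM : M.Normal) (σ : Γ) (c : G) :
    classAct φ χ σ (mConjClass M c) = mConjClass M (twistConj φ χ σ c) := by
  rw [classAct_eq_image]
  ext g
  constructor
  · rintro ⟨_, ⟨t, ht, rfl⟩, rfl⟩
    refine ⟨φ σ * t * (φ σ)⁻¹, hM.conj_mem t ht _, ?_⟩
    simp only [twistConj, conj_pow]
    group
  · rintro ⟨t, ht, rfl⟩
    refine ⟨(φ σ)⁻¹ * t * φ σ * c * ((φ σ)⁻¹ * t * φ σ)⁻¹,
      ⟨(φ σ)⁻¹ * t * φ σ, by simpa using hM.conj_mem t ht (φ σ)⁻¹, rfl⟩, ?_⟩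
    simp only [twistConj, conj_pow]
    group

theorem classOrbit_mConjClass_eq_iff (hm : Monoid.exponent G ∣ m) {M : Subgroup G}
    (hM : M.Normal) {b c : G} :
    classOrbit φ χ (mConjClass M b) = classOrbit φ χ (mConjClass M c) ↔
      ∃ σ, c ∈ mConjClass M (twistConj φ χ σ b) := by
  simp only [classOrbit_eq_iff hm, classAct_mConjClass hM, mConjClass_eq_iff_mem]

theorem bInv_eq_card_image {n : ℕ} (ρ : G →* Equiv.Perm (Fin n)) (M : Subgroup G) :
    bInv ρ M φ χ = Nat.card ((classOrbit φ χ ∘ mConjClass M) '' ASet ρ M) := by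
  rw [bInv, Set.image_comp, ← conjClassesIn_eq_image]
  congr 2
  ext O
  constructor <;> rintro ⟨C, hC, rfl⟩ <;> exact ⟨C, hC, rfl⟩

end TwistedAction

theorem Nat.card_image_le_card_image_of_subset {α β γ : Type*} {f : α → β} {g : α → γ}
    {S S' : Set α} (hSS' : S ⊆ S') (hfin : (g '' S').Finite)
    (hfg : ∀ x ∈ S, ∀ y ∈ S, g x = g y → f x = f y) :
    Nat.card (f '' S) ≤ Nat.card (g '' S') := by
  rcases S.eq_empty_or_nonempty with rfl | ⟨x, -⟩
  · simp
  have : Nonempty α := ⟨x⟩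
  classical
  rw [Nat.card_coe_set_eq, Nat.card_coe_set_eq]
  refine Set.ncard_le_ncard_of_injOn (fun z => g (Function.invFunOn f S z))
    (fun z hz => ⟨_, hSS' (Function.invFunOn_mem hz), rfl⟩) ?_ hfin
  intro z hz w hw hzw
  rw [← Function.invFunOn_eq hz, ← Function.invFunOn_eq hw]
  exact hfg _ (Function.invFunOn_mem hz) _ (Function.invFunOn_mem hw) hzw

theorem Subgroup.map_le_map_sup_of_inv_mul_mem {Γ G : Type*} [Group Γ] [Group G]
    {π φ : Γ →* G} {N : Subgroup G} (hφ : ∀ x, (π x)⁻¹ * φ x ∈ N) (H : Subgroup Γ) :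
    H.map π ≤ H.map φ ⊔ N := by
  rintro _ ⟨γ, hγ, rfl⟩
  have hπγ : π γ = φ γ * ((π γ)⁻¹ * φ γ)⁻¹ := by group
  rw [hπγ]
  exact mul_mem_sup (mem_map_of_mem φ hγ) (N.inv_mem (hφ γ))

section Commutator

variable {Γ G : Type*} [Group Γ] [Group G] {m : ℕ} {φ : Γ →* G} {χ : Γ →* (ZMod m)ˣ}

theorem exists_twistConj_mem_mConjClass_of_sup_commutator {π : Γ →* G}
    (hπ : Function.Surjective π) {N K : Subgroup G} [N.Normal] (hK : K ≤ commutator G)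
    (hφ : ∀ x, (π x)⁻¹ * φ x ∈ N) {b c : G}
    (h : ∃ σ, c ∈ mConjClass (N ⊔ K) (twistConj φ χ σ b)) :
    ∃ σ, c ∈ mConjClass N (twistConj φ χ σ b) := by
  obtain ⟨σ, t, ht, rfl⟩ := h
  have hcomm : commutator G = (commutator Γ).map π := by
    rw [commutator_def, commutator_def, map_commutator, map_top_of_surjective π hπ]
  have hK' : K ≤ N ⊔ (commutator Γ).map φ :=
    hK.trans (hcomm.trans_le ((map_le_map_sup_of_inv_mul_mem hφ _).trans_eq (sup_comm _ _)))
  obtain ⟨n, hn, _, ⟨γ, hγ, rfl⟩, rfl⟩ :=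
    mem_sup_of_normal_left.mp (sup_le le_sup_left hK' ht)
  have hχγ : χ γ = 1 := Abelianization.commutator_subset_ker χ hγ
  refine ⟨γ * σ, n, hn, ?_⟩
  rw [twistConj_of_map_eq_one hχγ]
  group

end Commutator

theorem statement5_general {n : ℕ} {G : Type*} [Group G] [Finite G]
    (ρ : G →* Equiv.Perm (Fin n))
    {Γ : Type*} [Group Γ] {m : ℕ} (hm : Monoid.exponent G ∣ m) (χ : Γ →* (ZMod m)ˣ)
    (T N : Subgroup G) (hTnormal : T.Normal) (hNnormal : N.Normal) (hNT : N ≤ T)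
    (ha : aInv ρ (N : Set G) = aInv ρ (T : Set G))
    (π : Γ →* G) (hπ : Function.Surjective π)
    (φ : Γ →* G) (hφ : ∀ x, (π x)⁻¹ * φ x ∈ N) :
    bInv ρ N φ χ ≤ bInv ρ (N ⊔ (T ⊓ commutator G)) φ χ := by
  have hN'normal : (N ⊔ (T ⊓ commutator G)).Normal := sup_normal _ _
  rw [bInv_eq_card_image, bInv_eq_card_image]
  refine Nat.card_image_le_card_image_of_subset
    (ASet_subset_ASet ρ (SetLike.coe_subset_coe.mpr le_sup_left)
      (SetLike.coe_subset_coe.mpr (sup_le hNT inf_le_left)) ha) (Set.toFinite _) ?_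
  intro b _ c _ hbc
  exact (classOrbit_mConjClass_eq_iff hm hNnormal).mpr
    (exists_twistConj_mem_mConjClass_of_sup_commutator hπ inf_le_right hφ
      ((classOrbit_mConjClass_eq_iff hm hN'normal).mp hbc))

/-- Let `G` be a finite group with an injective homomorphism
`ρ : G → Sym({1,…,n})` with transitive image, `Γ` a group, `χ : Γ → (ℤ/mℤ)ˣ` a homomorphism
with `m` a multiple of the exponent of `G`.  Suppose `T` and `N` are normal subgroups of `G`
with `N ⊆ T` and `a(N) = a(T)`, `π : Γ → G` is a surjective homomorphism, and `φ : Γ → G` is a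
homomorphism with `φ(x)N = π(x)N` for all `x ∈ Γ`.  Then
`b(N,φ,χ) ≤ b(N·(T ∩ [G,G]), φ, χ)`. -/
theorem statement5 {n : ℕ} {G : Type*} [Group G] [Finite G]
    (ρ : G →* Equiv.Perm (Fin n)) (hρ : Function.Injective ρ)
    (htrans : ∀ a b : Fin n, ∃ g : G, ρ g a = b)
    {Γ : Type*} [Group Γ] {m : ℕ} (hm : Monoid.exponent G ∣ m) (χ : Γ →* (ZMod m)ˣ)
    (T N : Subgroup G) (hTnormal : T.Normal) (hNnormal : N.Normal) (hNT : N ≤ T)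
    (ha : aInv ρ (N : Set G) = aInv ρ (T : Set G))
    (π : Γ →* G) (hπ : Function.Surjective π)
    (φ : Γ →* G) (hφ : ∀ x, (π x)⁻¹ * φ x ∈ N) :
    bInv ρ N φ χ ≤ bInv ρ (N ⊔ (T ⊓ commutator G)) φ χ :=
  statement5_general ρ hm χ T N hTnormal hNnormal hNT ha π hπ φ hφ
end

section
/- Let G ≤ S₆ be the wreath product C₃ ≀ C₂, i.e. the subgroup of Sym({1,…,6}) generated by the permutations (1 2 3), (4 5 6) and (1 4)(2 5)(3 6), let ρ be the inclusion G → Sym({1,…,6}) (so n = 6), and let T := ⟨(1 2 3),(4 5 6)⟩, an abelian normal subgroup of G isomorphic to C₃ × C₃, with quotient map q : G → G/T. Then a(T) = 2 and A(T) = {(1 2 3), (1 3 2), (4 5 6), (4 6 5)}. Moreover, let Γ be a group, π : Γ → G a homomorphism with π(Γ)·T = G, and χ : Γ → (ℤ/3ℤ)ˣ a surjective homomorphism, and let Γ act on A(T) by x·t := π(x) t^{k(x)} π(x)⁻¹, where k(x) ∈ ℕ is any representative of χ(x)⁻¹ ∈ (ℤ/3ℤ)ˣ. If ker(q ∘ π)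 = ker(χ) then this action has exactly 2 orbits, and if ker(q ∘ π) ≠ ker(χ) then it has exactly 1 orbit. -/
/-- The number of orbits of the twisted action `x·t = π(x) t^{k(x)} π(x)⁻¹` of `Γ` on
`A(T)`, where `k(x)` is a representative of `χ(x)⁻¹ ∈ (ℤ/mℤ)ˣ`. -/
noncomputable def bGalOrbits {n : ℕ} {Γ G : Type*} [Group Γ] [Group G] {m : ℕ}
    (ρ : G →* Equiv.Perm (Fin n)) (T : Subgroup G) (π : Γ →* G) (χ : Γ →* (ZMod m)ˣ) : ℕ :=
  Nat.card {O : Set G | ∃ t ∈ ASet ρ (T : Set G),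
    O = {t' | ∃ σ : Γ, π σ * t ^ (ZMod.val (((χ σ)⁻¹ : (ZMod m)ˣ) : ZMod m)) * (π σ)⁻¹ = t'}}

/-- The 3-cycle `(1 2 3) ∈ S₆` (on `{0,…,5}` this is `(0 1 2)`). -/
def cyc123 : Equiv.Perm (Fin 6) := c[0, 1, 2]

/-- The 3-cycle `(4 5 6) ∈ S₆` (on `{0,…,5}` this is `(3 4 5)`). -/
def cyc456 : Equiv.Perm (Fin 6) := c[3, 4, 5]

/-- The involution `(1 4)(2 5)(3 6) ∈ S₆` (on `{0,…,5}` this is `(0 3)(1 4)(2 5)`). -/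
def blockSwap : Equiv.Perm (Fin 6) :=
  Equiv.swap 0 3 * Equiv.swap 1 4 * Equiv.swap 2 5

/-- The wreath product `C₃ ≀ C₂ ⊆ S₆`, generated by `(1 2 3)`, `(4 5 6)` and
`(1 4)(2 5)(3 6)`. -/
def wreathC3C2 : Subgroup (Equiv.Perm (Fin 6)) :=
  Subgroup.closure {cyc123, cyc456, blockSwap}

/-- The subgroup `T = ⟨(1 2 3),(4 5 6)⟩ ≅ C₃ × C₃` of `C₃ ≀ C₂`. -/
def wreathT : Subgroup ↥wreathC3C2 :=
  (Subgroup.closure {cyc123, cyc456}).subgroupOf wreathC3C2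

/-!
The conjugation action of `G = C₃ ≀ C₂` on its abelian index-two subgroup `T` factors through
`G / T`, the non-trivial coset acting by the block swap `s`, which exchanges `(1 2 3)` and
`(4 5 6)`. Since every element of `T` has order three, `t ↦ t ^ k(x)` is `t ↦ t` or `t ↦ t⁻¹`
according to whether `χ x = 1`. Hence `x · t` depends only on the pair `(q (π x), χ x)`, which
ranges over a subgroup of `C₂ × C₂` surjecting onto both factors: the diagonal when the two
kernels agree (orbits `{t, s t⁻¹ s⁻¹}`), everything otherwise
(orbits `{t, t⁻¹, s t s⁻¹, s t⁻¹ s⁻¹}`).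
By Burnside's lemma an element of prime order `p` has index `(p - 1) / p` times the number of
points it moves, so in `T` the 3-cycles have index `2` and the products of two 3-cycles index `4`.
-/

open MulAction Subgroup

theorem Equiv.Perm.card_orbitRel_zpowers_mul_prime {α : Type*} [Finite α] {p : ℕ}
    [Fact p.Prime] {σ : Equiv.Perm α} (hσ : orderOf σ = p) :
    Nat.card (orbitRel.Quotient (zpowers σ) α) * p =
      Nat.card α + (p - 1) * Nat.card (Function.fixedPoints σ) := by
  classical
  have := Fintype.ofFinite α
  have hcard : Nat.card (zpowers σ) = p := by rw [Nat.card_zpowers, hσ]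
  have fixedBy_subset {g g' : zpowers σ} (h : g' ∈ zpowers g) : fixedBy α g ⊆ fixedBy α g' := by
    obtain ⟨k, rfl⟩ := mem_zpowers_iff.mp h
    exact fixedBy_subset_fixedBy_zpow α g k
  -- a non-trivial element of a group of prime order generates it
  have hfix (g : zpowers σ) (hg : g ≠ 1) :
      Fintype.card (fixedBy α g) = Nat.card (Function.fixedPoints σ) := by
    rw [← Nat.card_eq_fintype_card]
    show Nat.card (fixedBy α g) = Nat.card (fixedBy α (⟨σ, mem_zpowers σ⟩ : zpowers σ))
    refine congrArg (fun s : Set α => Nat.card s) ((fixedBy_subset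
      (mem_zpowers_of_prime_card hcard hg)).antisymm (fixedBy_subset ?_))
    obtain ⟨k, hk⟩ := mem_zpowers_iff.mp g.2
    exact mem_zpowers_iff.mpr ⟨k, Subtype.ext hk⟩
  have burnside := sum_card_fixedBy_eq_card_orbits_mul_card_group (zpowers σ) α
  rw [Fintype.sum_eq_add_sum_compl 1, Finset.sum_congr rfl fun g hg => hfix g (by simpa using hg),
    Finset.sum_const, Finset.card_compl, Finset.card_singleton, smul_eq_mul] at burnside
  simp only [← Nat.card_eq_fintype_card, hcard, fixedBy_one_eq_univ] at burnside
  rw [← burnside]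
  simp

theorem permIndex_mul_prime {n : ℕ} {G : Type*} [Group G] (ρ : G →* Equiv.Perm (Fin n)) {g : G}
    {p : ℕ} [hp : Fact p.Prime] (hg : orderOf (ρ g) = p) :
    permIndex ρ g * p = (p - 1) * (n - Nat.card (Function.fixedPoints (ρ g))) := by
  have hburnside := Equiv.Perm.card_orbitRel_zpowers_mul_prime hg
  rw [Nat.card_eq_fintype_card (α := Fin n), Fintype.card_fin] at hburnside
  have hfix : Nat.card (Function.fixedPoints (ρ g)) ≤ n :=
    (Finite.card_subtype_le _).trans_eq (Nat.card_eq_fintype_card.trans (Fintype.card_fin n))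
  have hp1 : (p - 1) * n + n = n * p := by
    have := hp.out.one_le
    zify [this]
    ring
  unfold permIndex
  rw [Nat.sub_mul, Nat.mul_sub, hburnside]
  omega

theorem Subgroup.mem_closure_pair_of_commute {G : Type*} [Group G] {x y z : G} (h : Commute x y) :
    z ∈ closure {x, y} ↔ ∃ m n : ℤ, x ^ m * y ^ n = z := by
  constructor
  · intro hz
    induction hz using closure_induction with
    | mem z hz =>
      rcases hz with rfl | rfl
      exacts [⟨1, 0, by simp⟩, ⟨0, 1, by simp⟩]
    | one => exact ⟨0, 0, by simp⟩
    | mul _ _ _ _ h₁ h₂ =>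
      obtain ⟨m, n, rfl⟩ := h₁
      obtain ⟨m', n', rfl⟩ := h₂
      refine ⟨m + m', n + n', ?_⟩
      simp only [zpow_add, mul_assoc, (h.zpow_zpow m' n).symm.left_comm]
    | inv _ _ h' =>
      obtain ⟨m, n, rfl⟩ := h'
      refine ⟨-m, -n, ?_⟩
      rw [mul_inv_rev, zpow_neg, zpow_neg, (h.zpow_zpow m n).inv_inv.eq]
  · rintro ⟨m, n, rfl⟩
    exact mul_mem (zpow_mem (subset_closure (by simp)) m) (zpow_mem (subset_closure (by simp)) n)

theorem Subgroup.exists_mem_notMem_of_index_eq_two {G : Type*} [Group G] {H K : Subgroup G}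
    (hH : H.index = 2) (hK : K.index = 2) (hne : H ≠ K) : ∃ x ∈ H, x ∉ K := by
  by_contra! hHK
  have hrel := relIndex_mul_index (H := H) (K := K) hHK
  rw [hH, hK, Nat.mul_eq_right two_ne_zero, relIndex_eq_one] at hrel
  exact hne (le_antisymm hHK hrel)

theorem Subgroup.index_comap_eq_of_forall_eq_mul {Γ G : Type*} [Group Γ] [Group G]
    {T : Subgroup G} [T.Normal] (f : Γ →* G) (hf : ∀ g, ∃ x, ∃ t ∈ T, g = f x * t) :
    (T.comap f).index = T.index := by
  have hsup : f.range ⊔ T = ⊤ := by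
    refine eq_top_iff.mpr fun g _ => ?_
    obtain ⟨x, t, ht, rfl⟩ := hf g
    exact mul_mem (mem_sup_left ⟨x, rfl⟩) (mem_sup_right ht)
  rw [index_comap, ← relIndex_sup_right, hsup, relIndex_top_right]

theorem pow_val_inv_units_zmod_three {M : Type*} [Group M] {t : M} (ht : t ^ 3 = 1)
    (u : (ZMod 3)ˣ) : t ^ (((u⁻¹ : (ZMod 3)ˣ) : ZMod 3).val) = if u = 1 then t else t⁻¹ := by
  obtain rfl | rfl : u = 1 ∨ u = -1 := by revert u; decide
  · simp [show ZMod.val (1 : ZMod 3) = 1 from rfl]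
  · rw [if_neg (by decide), show (((-1)⁻¹ : (ZMod 3)ˣ) : ZMod 3).val = 2 from rfl,
      eq_inv_iff_mul_eq_one, ← pow_succ, ht]

section Twisted

variable {Γ G : Type*} [Group Γ] [Group G] {T : Subgroup G} {s : G}

def twistedAction {m : ℕ} (π : Γ →* G) (χ : Γ →* (ZMod m)ˣ) (σ : Γ) (t : G) : G :=
  π σ * t ^ (ZMod.val (((χ σ)⁻¹ : (ZMod m)ˣ) : ZMod m)) * (π σ)⁻¹

def twistedOrbit {m : ℕ} (π : Γ →* G) (χ : Γ →* (ZMod m)ˣ) (t : G) : Set G :=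
  Set.range fun σ => twistedAction π χ σ t

theorem bGalOrbits_eq_ncard_image {n m : ℕ} (ρ : G →* Equiv.Perm (Fin n)) (T : Subgroup G)
    (π : Γ →* G) (χ : Γ →* (ZMod m)ˣ) :
    bGalOrbits ρ T π χ = (twistedOrbit π χ '' ASet ρ (T : Set G)).ncard := by
  rw [bGalOrbits, Nat.card_coe_set_eq]
  congr 1
  ext O
  exact exists_congr fun t => and_congr_right fun _ => eq_comm

open scoped Classical in
theorem conj_eq_ite_of_index_eq_two (hT : T.index = 2) [IsMulCommutative T] (hs : s ∉ T)
    (g : G) {t : G} (ht : t ∈ T) : g * t * g⁻¹ = if g ∈ T then t else s * t * s⁻¹ := by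
  split_ifs with hg
  · rw [setLike_mul_comm hg ht, mul_inv_cancel_right]
  · have hu : s⁻¹ * g ∈ T := (mul_mem_iff_of_index_two hT).mpr (iff_of_false (by simpa) hg)
    calc g * t * g⁻¹ = s * ((s⁻¹ * g) * t) * (s⁻¹ * g)⁻¹ * s⁻¹ := by group
      _ = s * t * s⁻¹ := by
        rw [setLike_mul_comm hu ht]
        group

open scoped Classical in
theorem twistedAction_eq_ite (hT : T.index = 2) [IsMulCommutative T] (hs : s ∉ T) (π : Γ →* G)
    (χ : Γ →* (ZMod 3)ˣ) (σ : Γ) {t : G} (ht : t ∈ T) (ht3 : t ^ 3 = 1) :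
    twistedAction π χ σ t =
      if π σ ∈ T then (if χ σ = 1 then t else t⁻¹)
      else s * (if χ σ = 1 then t else t⁻¹) * s⁻¹ := by
  rw [twistedAction, pow_val_inv_units_zmod_three ht3,
    conj_eq_ite_of_index_eq_two hT hs _ (by split_ifs; exacts [ht, inv_mem ht])]

theorem twistedOrbit_eq_of_comap_eq_ker (hT : T.index = 2) [IsMulCommutative T] (hs : s ∉ T)
    {π : Γ →* G} {χ : Γ →* (ZMod 3)ˣ} (hχ : Function.Surjective χ) (hker : T.comap π = χ.ker)
    {t : G} (ht : t ∈ T) (ht3 : t ^ 3 = 1) :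
    twistedOrbit π χ t = {t, s * t⁻¹ * s⁻¹} := by
  have hmem (σ : Γ) : π σ ∈ T ↔ χ σ = 1 := by rw [← mem_comap, hker, MonoidHom.mem_ker]
  ext t'
  simp only [twistedOrbit, Set.mem_range, twistedAction_eq_ite hT hs π χ _ ht ht3,
    Set.mem_insert_iff, Set.mem_singleton_iff, hmem]
  constructor
  · rintro ⟨σ, rfl⟩
    by_cases h : χ σ = 1 <;> simp [h]
  · rintro (rfl | rfl)
    · exact ⟨1, by simp⟩
    · obtain ⟨σ, hσ⟩ := hχ (-1)
      exact ⟨σ, by simp [hσ, show (-1 : (ZMod 3)ˣ) ≠ 1 by decide]⟩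

theorem twistedOrbit_eq_of_comap_ne_ker (hT : T.index = 2) [IsMulCommutative T] (hs : s ∉ T)
    {π : Γ →* G} (hπ : ∀ g, ∃ x, ∃ t ∈ T, g = π x * t) {χ : Γ →* (ZMod 3)ˣ}
    (hχ : Function.Surjective χ) (hker : T.comap π ≠ χ.ker) {t : G} (ht : t ∈ T)
    (ht3 : t ^ 3 = 1) :
    twistedOrbit π χ t = {t, t⁻¹, s * t * s⁻¹, s * t⁻¹ * s⁻¹} := by
  have := normal_of_index_eq_two hT
  have hH : (T.comap π).index = 2 := (index_comap_eq_of_forall_eq_mul π hπ).trans hT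
  have hK : χ.ker.index = 2 := by
    rw [index_ker, MonoidHom.range_eq_top.mpr hχ, card_top, Nat.card_eq_fintype_card,
      ZMod.card_units]
  obtain ⟨u, huH, huK⟩ := exists_mem_notMem_of_index_eq_two hH hK hker
  obtain ⟨v, hvK, hvH⟩ := exists_mem_notMem_of_index_eq_two hK hH (Ne.symm hker)
  have huvH : u * v ∉ T.comap π := by simp [mul_mem_iff_of_index_two hH, huH, hvH]
  have huvK : u * v ∉ χ.ker := by simp [mul_mem_iff_of_index_two hK, huK, hvK]
  simp only [mem_comap, MonoidHom.mem_ker] at huH huK hvK hvH huvH huvK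
  ext t'
  simp only [twistedOrbit, Set.mem_range, twistedAction_eq_ite hT hs π χ _ ht ht3,
    Set.mem_insert_iff, Set.mem_singleton_iff]
  constructor
  · rintro ⟨σ, rfl⟩
    by_cases h : π σ ∈ T <;> by_cases h' : χ σ = 1 <;> simp [h, h']
  · rintro (rfl | rfl | rfl | rfl)
    · exact ⟨1, by simp⟩
    · exact ⟨u, by simp [huH, huK]⟩
    · exact ⟨v, by simp [hvH, hvK]⟩
    · exact ⟨u * v, by simp only [huvH, huvK, if_false]⟩

end Twisted

def blockRotations : Subgroup (Equiv.Perm (Fin 6)) :=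
  closure {cyc123, cyc456}

def blockThreeCycles : Finset (Equiv.Perm (Fin 6)) :=
  {cyc123, cyc123⁻¹, cyc456, cyc456⁻¹}

theorem mem_blockRotations_iff {g : Equiv.Perm (Fin 6)} :
    g ∈ blockRotations ↔ ∃ i < 3, ∃ j < 3, cyc123 ^ i * cyc456 ^ j = g := by
  have reduce {x : Equiv.Perm (Fin 6)} (hx : x ^ 3 = 1) (m : ℤ) : ∃ i < 3, x ^ i = x ^ m := by
    obtain ⟨i, hi⟩ := Int.eq_ofNat_of_zero_le (Int.emod_nonneg m (by norm_num : (3 : ℤ) ≠ 0))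
    refine ⟨i, by omega, ?_⟩
    rw [zpow_eq_zpow_emod' m hx, Nat.cast_ofNat, hi, zpow_natCast]
  rw [blockRotations, mem_closure_pair_of_commute (by decide : cyc123 * cyc456 = cyc456 * cyc123)]
  constructor
  · rintro ⟨m, n, rfl⟩
    obtain ⟨i, hi, hi'⟩ := reduce (x := cyc123) (by decide) m
    obtain ⟨j, hj, hj'⟩ := reduce (x := cyc456) (by decide) n
    exact ⟨i, hi, j, hj, by rw [hi', hj']⟩
  · rintro ⟨i, -, j, -, rfl⟩
    exact ⟨i, j, by simp only [zpow_natCast]⟩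

instance : IsMulCommutative blockRotations :=
  isMulCommutative_closure (by rintro x (rfl | rfl) y (rfl | rfl) <;> first | rfl | decide)

set_option maxRecDepth 4000 in
theorem pow_three_eq_one_of_mem_blockRotations {g : Equiv.Perm (Fin 6)}
    (hg : g ∈ blockRotations) : g ^ 3 = 1 := by
  obtain ⟨i, hi, j, hj, rfl⟩ := mem_blockRotations_iff.mp hg
  exact (by decide : ∀ i < 3, ∀ j < 3, (cyc123 ^ i * cyc456 ^ j) ^ 3 = 1) i hi j hj

set_option maxRecDepth 4000 in
theorem card_fixedPoints_of_mem_blockRotations {g : Equiv.Perm (Fin 6)}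
    (hg : g ∈ blockRotations) (h1 : g ≠ 1) :
    Nat.card (Function.fixedPoints g) = if g ∈ blockThreeCycles then 3 else 0 := by
  obtain ⟨i, hi, j, hj, rfl⟩ := mem_blockRotations_iff.mp hg
  rw [Nat.card_eq_fintype_card]
  revert h1
  exact (by decide : ∀ i < 3, ∀ j < 3, cyc123 ^ i * cyc456 ^ j ≠ 1 →
    Fintype.card (Function.fixedPoints ⇑(cyc123 ^ i * cyc456 ^ j)) =
      if cyc123 ^ i * cyc456 ^ j ∈ blockThreeCycles then 3 else 0) i hi j hj

theorem blockThreeCycles_subset_blockRotations {g : Equiv.Perm (Fin 6)}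
    (hg : g ∈ blockThreeCycles) : g ∈ blockRotations := by
  have h123 : cyc123 ∈ blockRotations := subset_closure (by simp)
  have h456 : cyc456 ∈ blockRotations := subset_closure (by simp)
  simp only [blockThreeCycles, Finset.mem_insert, Finset.mem_singleton] at hg
  rcases hg with rfl | rfl | rfl | rfl
  exacts [h123, inv_mem h123, h456, inv_mem h456]

theorem blockSwap_notMem_blockRotations : blockSwap ∉ blockRotations := by
  rintro hs
  obtain ⟨i, hi, j, hj, h⟩ := mem_blockRotations_iff.mp hs
  exact (by decide : ∀ i < 3, ∀ j < 3, cyc123 ^ i * cyc456 ^ j ≠ blockSwap) i hi j hj h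

theorem blockSwap_conj_mem_blockRotations {g : Equiv.Perm (Fin 6)} (hg : g ∈ blockRotations) :
    blockSwap * g * blockSwap⁻¹ ∈ blockRotations := by
  obtain ⟨i, hi, j, hj, rfl⟩ := mem_blockRotations_iff.mp hg
  refine mem_blockRotations_iff.mpr ⟨j, hj, i, hi, ?_⟩
  exact ((by decide : ∀ i < 3, ∀ j < 3, blockSwap * (cyc123 ^ i * cyc456 ^ j) * blockSwap⁻¹ =
    cyc123 ^ j * cyc456 ^ i) i hi j hj).symm

theorem blockSwap_mul_mem_or_mem {g : Equiv.Perm (Fin 6)} (hg : g ∈ wreathC3C2) :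
    blockSwap * g ∈ blockRotations ∨ g ∈ blockRotations := by
  have rotation_mul {x y : Equiv.Perm (Fin 6)} (hx : x ∈ blockRotations)
      (hy : blockSwap * y ∈ blockRotations ∨ y ∈ blockRotations) :
      blockSwap * (x * y) ∈ blockRotations ∨ x * y ∈ blockRotations := by
    refine hy.imp (fun hy => ?_) (mul_mem hx)
    rw [show blockSwap * (x * y) = blockSwap * x * blockSwap⁻¹ * (blockSwap * y) by group]
    exact mul_mem (blockSwap_conj_mem_blockRotations hx) hy
  have swap_mul {y : Equiv.Perm (Fin 6)}
      (hy : blockSwap * y ∈ blockRotations ∨ y ∈ blockRotations) :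
      blockSwap * (blockSwap * y) ∈ blockRotations ∨ blockSwap * y ∈ blockRotations := by
    rwa [← mul_assoc, show blockSwap * blockSwap = 1 by decide, one_mul, or_comm]
  have hgen {x : Equiv.Perm (Fin 6)} (hx : x ∈ ({cyc123, cyc456} : Set _)) :
      x ∈ blockRotations := subset_closure hx
  induction hg using closure_induction_left with
  | one => exact Or.inr (one_mem _)
  | mul_left x hx y _ ih =>
    rcases hx with rfl | rfl | rfl
    exacts [rotation_mul (hgen (by simp)) ih, rotation_mul (hgen (by simp)) ih, swap_mul ih]
  | inv_mul_cancel x hx y _ ih =>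
    rcases hx with rfl | rfl | rfl
    · exact rotation_mul (inv_mem (hgen (by simp))) ih
    · exact rotation_mul (inv_mem (hgen (by simp))) ih
    · rw [show blockSwap⁻¹ = blockSwap by decide]
      exact swap_mul ih

theorem index_wreathT : wreathT.index = 2 := by
  show blockRotations.relIndex wreathC3C2 = 2
  exact relIndex_eq_two_iff_exists_notMem_and'.mpr ⟨blockSwap, subset_closure (by simp),
    blockSwap_notMem_blockRotations, fun g hg => blockSwap_mul_mem_or_mem hg⟩

instance : IsMulCommutative wreathT :=
  inferInstanceAs (IsMulCommutative (blockRotations.subgroupOf wreathC3C2))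

theorem pow_three_eq_one_of_mem_wreathT {t : wreathC3C2} (ht : t ∈ wreathT) : t ^ 3 = 1 :=
  Subtype.ext (pow_three_eq_one_of_mem_blockRotations ht)

def wreathCyc123 : wreathC3C2 := ⟨cyc123, subset_closure (by simp)⟩
def wreathCyc456 : wreathC3C2 := ⟨cyc456, subset_closure (by simp)⟩
def wreathBlockSwap : wreathC3C2 := ⟨blockSwap, subset_closure (by simp)⟩

theorem wreathBlockSwap_notMem_wreathT : wreathBlockSwap ∉ wreathT :=
  blockSwap_notMem_blockRotations

theorem wreathBlockSwap_conj_cyc123 :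
    wreathBlockSwap * wreathCyc123 * wreathBlockSwap⁻¹ = wreathCyc456 := Subtype.ext (by decide)
theorem wreathBlockSwap_conj_cyc456 :
    wreathBlockSwap * wreathCyc456 * wreathBlockSwap⁻¹ = wreathCyc123 := Subtype.ext (by decide)

theorem permIndex_of_mem_wreathT {g : wreathC3C2} (hg : g ∈ wreathT) (h1 : g ≠ 1) :
    permIndex wreathC3C2.subtype g =
      if (g : Equiv.Perm (Fin 6)) ∈ blockThreeCycles then 2 else 4 := by
  have hg' : (g : Equiv.Perm (Fin 6)) ∈ blockRotations := hg
  have h1' : (g : Equiv.Perm (Fin 6)) ≠ 1 := by simpa using h1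
  have hind := permIndex_mul_prime (p := 3) wreathC3C2.subtype
    (orderOf_eq_prime (pow_three_eq_one_of_mem_blockRotations hg') h1')
  rw [coe_subtype, card_fixedPoints_of_mem_blockRotations hg' h1'] at hind
  split_ifs at hind ⊢ <;> omega

theorem aInv_wreathT : aInv wreathC3C2.subtype (wreathT : Set wreathC3C2) = 2 := by
  have hmem : wreathCyc123 ∈ wreathT := blockThreeCycles_subset_blockRotations (by decide)
  have hne : wreathCyc123 ≠ 1 := fun h => absurd (congrArg Subtype.val h) (by decide)
  have hind : permIndex wreathC3C2.subtype wreathCyc123 = 2 := by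
    rw [permIndex_of_mem_wreathT hmem hne, if_pos (by decide)]
  refine le_antisymm (Nat.sInf_le ⟨_, hmem, hne, hind⟩) (le_csInf ⟨2, _, hmem, hne, hind⟩ ?_)
  rintro _ ⟨g, hg, h1, rfl⟩
  rw [permIndex_of_mem_wreathT hg h1]
  split_ifs <;> omega

theorem mem_ASet_wreathT_iff {g : wreathC3C2} :
    g ∈ ASet wreathC3C2.subtype (wreathT : Set wreathC3C2) ↔
      (g : Equiv.Perm (Fin 6)) ∈ blockThreeCycles := by
  rw [ASet, Set.mem_ofPred_eq, aInv_wreathT]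
  constructor
  · rintro ⟨hg, h1, hind⟩
    rw [permIndex_of_mem_wreathT hg h1] at hind
    split_ifs at hind with h
    exacts [h, absurd hind (by norm_num)]
  · intro h
    have hg : g ∈ wreathT := blockThreeCycles_subset_blockRotations h
    have h1 : g ≠ 1 := by
      rintro rfl
      exact absurd h (by decide)
    exact ⟨hg, h1, by rw [permIndex_of_mem_wreathT hg h1, if_pos h]⟩

theorem ASet_wreathT : ASet wreathC3C2.subtype (wreathT : Set wreathC3C2) =
    {wreathCyc123, wreathCyc123⁻¹, wreathCyc456, wreathCyc456⁻¹} := by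
  ext g
  simp [mem_ASet_wreathT_iff, blockThreeCycles, Subtype.ext_iff, wreathCyc123, wreathCyc456]

theorem wreathBlockSwap_conj_inv_cyc123 :
    wreathBlockSwap * wreathCyc123⁻¹ * wreathBlockSwap⁻¹ = wreathCyc456⁻¹ := by
  rw [← conj_inv, wreathBlockSwap_conj_cyc123]

theorem wreathBlockSwap_conj_inv_cyc456 :
    wreathBlockSwap * wreathCyc456⁻¹ * wreathBlockSwap⁻¹ = wreathCyc123⁻¹ := by
  rw [← conj_inv, wreathBlockSwap_conj_cyc456]

theorem bGalOrbits_wreathT_of_comap_eq_ker {Γ : Type*} [Group Γ] {π : Γ →* wreathC3C2}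
    {χ : Γ →* (ZMod 3)ˣ} (hχ : Function.Surjective χ) (hker : wreathT.comap π = χ.ker) :
    bGalOrbits wreathC3C2.subtype wreathT π χ = 2 := by
  have horbit (t) (ht : t ∈ ASet wreathC3C2.subtype (wreathT : Set wreathC3C2)) :
      twistedOrbit π χ t = {t, wreathBlockSwap * t⁻¹ * wreathBlockSwap⁻¹} :=
    twistedOrbit_eq_of_comap_eq_ker index_wreathT wreathBlockSwap_notMem_wreathT hχ hker ht.1
      (pow_three_eq_one_of_mem_wreathT ht.1)
  have hne :
      ({wreathCyc123, wreathCyc456⁻¹} : Set wreathC3C2) ≠ {wreathCyc123⁻¹, wreathCyc456} := by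
    intro h
    have hmem := h ▸ Set.mem_insert wreathCyc123 {wreathCyc456⁻¹}
    simp only [Set.mem_insert_iff, Set.mem_singleton_iff, Subtype.ext_iff] at hmem
    exact absurd hmem (by decide)
  rw [bGalOrbits_eq_ncard_image, Set.image_congr horbit, ASet_wreathT]
  simp only [Set.image_insert_eq, Set.image_singleton, inv_inv, wreathBlockSwap_conj_cyc123,
    wreathBlockSwap_conj_cyc456, wreathBlockSwap_conj_inv_cyc123, wreathBlockSwap_conj_inv_cyc456]
  rw [Set.ncard_eq_two]
  refine ⟨_, _, hne, ?_⟩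
  ext O
  simp only [Set.mem_insert_iff, Set.mem_singleton_iff, Set.pair_comm wreathCyc456,
    Set.pair_comm wreathCyc456⁻¹]
  tauto

theorem bGalOrbits_wreathT_of_comap_ne_ker {Γ : Type*} [Group Γ] {π : Γ →* wreathC3C2}
    (hπ : ∀ g, ∃ x, ∃ t ∈ wreathT, g = π x * t) {χ : Γ →* (ZMod 3)ˣ}
    (hχ : Function.Surjective χ) (hker : wreathT.comap π ≠ χ.ker) :
    bGalOrbits wreathC3C2.subtype wreathT π χ = 1 := by
  have horbit (t) (ht : t ∈ ASet wreathC3C2.subtype (wreathT : Set wreathC3C2)) :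
      twistedOrbit π χ t = ASet wreathC3C2.subtype (wreathT : Set wreathC3C2) := by
    rw [twistedOrbit_eq_of_comap_ne_ker index_wreathT wreathBlockSwap_notMem_wreathT hπ hχ hker
      ht.1 (pow_three_eq_one_of_mem_wreathT ht.1)]
    rw [ASet_wreathT] at ht ⊢
    rcases ht with rfl | rfl | rfl | rfl <;>
    simp only [inv_inv, wreathBlockSwap_conj_cyc123, wreathBlockSwap_conj_cyc456,
      wreathBlockSwap_conj_inv_cyc123, wreathBlockSwap_conj_inv_cyc456] <;>
    ext <;> simp only [Set.mem_insert_iff, Set.mem_singleton_iff] <;> tauto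
  rw [bGalOrbits_eq_ncard_image, Set.image_congr horbit, Set.Nonempty.image_const,
    Set.ncard_singleton]
  exact ⟨wreathCyc123, by simp [ASet_wreathT]⟩

/-- For `G = C₃ ≀ C₂ ⊆ S₆` with `T = ⟨(1 2 3),(4 5 6)⟩`, one has `a(T) = 2`
and `A(T) = {(1 2 3), (1 3 2), (4 5 6), (4 6 5)}`.  Moreover, for a group `Γ`, a homomorphism
`π : Γ → G` with `π(Γ)·T = G` and a surjective `χ : Γ → (ℤ/3ℤ)ˣ`, the twisted action
`x·t = π(x) t^{k(x)} π(x)⁻¹` (with `k(x)` representing `χ(x)⁻¹`) on `A(T)` has exactly `2`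
orbits if `ker(q∘π) = ker(χ)` and exactly `1` orbit otherwise. -/
theorem statement15 :
    aInv wreathC3C2.subtype (wreathT : Set ↥wreathC3C2) = 2 ∧
    (∀ g : ↥wreathC3C2, g ∈ ASet wreathC3C2.subtype (wreathT : Set ↥wreathC3C2) ↔
      ((g : Equiv.Perm (Fin 6)) = cyc123 ∨ (g : Equiv.Perm (Fin 6)) = cyc123⁻¹ ∨
        (g : Equiv.Perm (Fin 6)) = cyc456 ∨ (g : Equiv.Perm (Fin 6)) = cyc456⁻¹)) ∧
    ∀ (Γ : Type*) [Group Γ] (π : Γ →* ↥wreathC3C2)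
      (_ : ∀ g : ↥wreathC3C2, ∃ x : Γ, ∃ t ∈ wreathT, g = π x * t)
      (χ : Γ →* (ZMod 3)ˣ) (_ : Function.Surjective χ),
      (Subgroup.comap π wreathT = MonoidHom.ker χ →
        bGalOrbits wreathC3C2.subtype wreathT π χ = 2) ∧
      (Subgroup.comap π wreathT ≠ MonoidHom.ker χ →
        bGalOrbits wreathC3C2.subtype wreathT π χ = 1) :=
  ⟨aInv_wreathT,
    fun _ => mem_ASet_wreathT_iff.trans (by simp only [blockThreeCycles, Finset.mem_insert,
      Finset.mem_singleton]),
    fun _ _ _ hπ _ hχ =>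
      ⟨bGalOrbits_wreathT_of_comap_eq_ker hχ, bGalOrbits_wreathT_of_comap_ne_ker hπ hχ⟩⟩
end
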